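/- arXiv:2302.04686 — 2 statements merged into one kernel-verified Lean document; each statement's English description precedes it below -/
import Mathlib

section
/- Let ℓ, u ∈ ℝ^n with ℓ^l ≤ u^l for all l, let M_E be a constant with M_E ≥ 2(max_{l=1,...,n} u^l − min_{l=1,...,n} ℓ^l), and let β be a real number with 0 ≤ β ≤ max_l u^l − min_l ℓ^l. Then for any x and x_i in the box Π_{l=1}^n [ℓ^l, u^l], the following are equivalent: (i) ‖x − x_i‖_∞ ≥ β; (ii) there exist binary vectors δ^+, δ^- ∈ {0,1}^n satisfying δ_l^+ ≤ 1 − δ_l^- for all l, Σ_{l=1}^n (δ_l^+ + δ_l^-) ≥ 1, x^l − x_i^l ≥ β − M_E(1 − δ_l^+) for all l, and −x^l + x_i^l ≥ β − M_E(1 − δ_l^-) for all l. -/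
open Finset

/-- Big-M mixed-integer encoding of the condition `‖x - x_i‖_∞ ≥ β` (the point
`x` lies outside the interior of the box of radius `β` around `x_i`): with
`M_E ≥ 2(max_l u^l - min_l ℓ^l)` and `0 ≤ β ≤ max_l u^l - min_l ℓ^l`, for
`x, x_i` in the box `∏_l [ℓ^l, u^l]` the condition holds iff there exist
binary vectors `δ⁺, δ⁻ ∈ {0,1}^n` satisfying the listed linear inequalities. -/
theorem max_box_bigM_encoding (n : ℕ) (hn : 0 < n) (l u : Fin n → ℝ)
    (hlu : ∀ i, l i ≤ u i) (ME β : ℝ)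
    (hME : 2 * (Finset.univ.sup' (Finset.univ_nonempty_iff.mpr ⟨⟨0, hn⟩⟩) u -
        Finset.univ.inf' (Finset.univ_nonempty_iff.mpr ⟨⟨0, hn⟩⟩) l) ≤ ME)
    (hβ0 : 0 ≤ β)
    (hβ : β ≤ Finset.univ.sup' (Finset.univ_nonempty_iff.mpr ⟨⟨0, hn⟩⟩) u -
        Finset.univ.inf' (Finset.univ_nonempty_iff.mpr ⟨⟨0, hn⟩⟩) l)
    (x xi : Fin n → ℝ)
    (hx : ∀ i, l i ≤ x i ∧ x i ≤ u i) (hxi : ∀ i, l i ≤ xi i ∧ xi i ≤ u i) :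
    β ≤ ‖x - xi‖ ↔
      ∃ δp δm : Fin n → ℝ,
        (∀ i, δp i = 0 ∨ δp i = 1) ∧ (∀ i, δm i = 0 ∨ δm i = 1) ∧
        (∀ i, δp i ≤ 1 - δm i) ∧
        (1 ≤ ∑ i, (δp i + δm i)) ∧
        (∀ i, x i - xi i ≥ β - ME * (1 - δp i)) ∧
        (∀ i, -x i + xi i ≥ β - ME * (1 - δm i)) := by
  set S := Finset.univ.sup' (Finset.univ_nonempty_iff.mpr ⟨⟨0, hn⟩⟩) u -
      Finset.univ.inf' (Finset.univ_nonempty_iff.mpr ⟨⟨0, hn⟩⟩) l with hS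
  have hbound : ∀ j : Fin n, -S ≤ x j - xi j ∧ -S ≤ xi j - x j := by
    intro j
    have h1 : Finset.univ.inf' (Finset.univ_nonempty_iff.mpr ⟨⟨0, hn⟩⟩) l ≤ l j :=
      Finset.inf'_le _ (Finset.mem_univ j)
    have h2 : u j ≤ Finset.univ.sup' (Finset.univ_nonempty_iff.mpr ⟨⟨0, hn⟩⟩) u :=
      Finset.le_sup' _ (Finset.mem_univ j)
    have := (hx j).1; have := (hx j).2; have := (hxi j).1; have := (hxi j).2
    constructor <;> simp only [hS] <;> linarith
  have hβME : β - ME ≤ -S := by linarith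
  constructor
  · intro h
    have hkey : ∃ i : Fin n, β ≤ |x i - xi i| := by
      rcases eq_or_lt_of_le hβ0 with h0 | h0
      · exact ⟨⟨0, hn⟩, by rw [← h0]; exact abs_nonneg _⟩
      · by_contra hc
        push_neg at hc
        have : ‖x - xi‖ < β := by
          rw [pi_norm_lt_iff h0]
          intro i
          simpa [Real.norm_eq_abs] using hc i
        linarith
    obtain ⟨i, hi⟩ := hkey
    rcases abs_cases (x i - xi i) with ⟨heq, _⟩ | ⟨heq, _⟩
    · refine ⟨fun j => if j = i then 1 else 0, fun _ => 0, ?_, ?_, ?_, ?_, ?_, ?_⟩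
      · intro j; by_cases h : j = i <;> simp [h]
      · intro j; left; rfl
      · intro j; by_cases h : j = i <;> simp [h]
      · simp
      · intro j
        by_cases h : j = i
        · subst h; simp; linarith [heq ▸ hi]
        · simp only [if_neg h]
          have := (hbound j).1
          simp only [ge_iff_le]
          linarith
      · intro j
        have := (hbound j).2
        simp only [ge_iff_le]
        linarith
    · refine ⟨fun _ => 0, fun j => if j = i then 1 else 0, ?_, ?_, ?_, ?_, ?_, ?_⟩
      · intro j; left; rfl
      · intro j; by_cases h : j = i <;> simp [h]
      · intro j; by_cases h : j = i <;> simp [h]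
      · simp
      · intro j
        have := (hbound j).1
        simp only [ge_iff_le]
        linarith
      · intro j
        by_cases h : j = i
        · subst h; simp only [if_pos rfl, ge_iff_le, mul_zero, sub_self]
          have : β ≤ -(x j - xi j) := heq ▸ hi
          norm_num; linarith
        · simp only [if_neg h]
          have := (hbound j).2
          simp only [ge_iff_le]
          linarith
  · rintro ⟨δp, δm, hp, hm, _, hsum, hxp, hxm⟩
    have hkey : ∃ i : Fin n, δp i = 1 ∨ δm i = 1 := by
      by_contra hc
      push_neg at hc
      have : ∀ i : Fin n, δp i + δm i = 0 := by
        intro i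
        rcases hp i with h1 | h1
        · rcases hm i with h2 | h2
          · rw [h1, h2]; norm_num
          · exact absurd h2 (hc i).2
        · exact absurd h1 (hc i).1
      rw [Finset.sum_congr rfl fun i _ => this i] at hsum
      simp at hsum
      linarith
    obtain ⟨i, hi⟩ := hkey
    have habs : β ≤ |x i - xi i| := by
      rcases hi with hi | hi
      · have := hxp i
        rw [hi] at this
        calc β ≤ x i - xi i := by linarith
          _ ≤ |x i - xi i| := le_abs_self _
      · have := hxm i
        rw [hi] at this
        calc β ≤ -(x i - xi i) := by linarith
          _ ≤ |x i - xi i| := neg_le_abs _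
    calc β ≤ |x i - xi i| := habs
      _ = ‖(x - xi) i‖ := by simp [Real.norm_eq_abs]
      _ ≤ ‖x - xi‖ := norm_le_pi_norm _ i
end

section
/- Let ω_1, ..., ω_K ∈ ℝ^n, γ ∈ ℝ^K, a_1, ..., a_K ∈ ℝ^n, b ∈ ℝ^K, D ⊆ ℝ^n, and suppose M_φ ≥ (ω_h − ω_j)ᵀX + γ_h − γ_j for all j, h and all X ∈ D, and M_j^- ≤ a_jᵀX + b_j ≤ M_j^+ for all j and all X ∈ D. Then for every X ∈ D, the set of attainable values { Σ_{j=1}^K v_j : ζ ∈ {0,1}^K, Σ_j ζ_j = 1, v ∈ ℝ^K, (ζ, v, X) satisfies the big-M separation inequalities ω_jᵀX + γ_j ≥ ω_hᵀX + γ_h − M_φ(1 − ζ_j) (h ≠ j) and the big-M surrogate inequalities v_j ≤ a_jᵀX + b_j − M_j^-(1 − ζ_j), v_j ≥ a_jᵀX + b_j − M_j^+(1 − ζ_j), M_j^- ζ_j ≤ v_j ≤ M_j^+ ζ_j } equals { a_jᵀX + b_j : j ∈ argmax_{h=1,...,K} (ω_hᵀX + γ_h) }. In particular Σ_j v_j always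 equals the surrogate value a_{j(X)}ᵀX + b_{j(X)} for some maximizer j(X) of the separation function, and every such value is attainable. -/
open Finset

/-- Correctness of the full mixed-integer linear encoding of the piecewise
affine surrogate: for `X ∈ D`, the attainable values of `∑_j v_j` over all
`(ζ, v)` satisfying the big-M separation and surrogate inequalities coincide
exactly with the surrogate values `a_jᵀX + b_j` over the maximizers `j` of
the separation function `ω_hᵀX + γ_h`. -/
theorem surrogate_milp_encoding_correct (n K : ℕ)
    (ω : Fin K → Fin n → ℝ) (γ : Fin K → ℝ)
    (a : Fin K → Fin n → ℝ) (b : Fin K → ℝ)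
    (D : Set (Fin n → ℝ)) (Mφ : ℝ) (Mm Mp : Fin K → ℝ)
    (hMφ : ∀ j h : Fin K, ∀ X ∈ D,
      (∑ i, (ω h i - ω j i) * X i) + γ h - γ j ≤ Mφ)
    (hMb : ∀ j : Fin K, ∀ X ∈ D,
      Mm j ≤ (∑ i, a j i * X i) + b j ∧ (∑ i, a j i * X i) + b j ≤ Mp j)
    (X : Fin n → ℝ) (hX : X ∈ D) :
    {s : ℝ | ∃ ζ v : Fin K → ℝ,
        (∀ j, ζ j = 0 ∨ ζ j = 1) ∧ (∑ j, ζ j = 1) ∧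
        (∀ j h : Fin K, h ≠ j →
          (∑ i, ω h i * X i) + γ h - Mφ * (1 - ζ j) ≤ (∑ i, ω j i * X i) + γ j) ∧
        (∀ j, v j ≤ (∑ i, a j i * X i) + b j - Mm j * (1 - ζ j)) ∧
        (∀ j, (∑ i, a j i * X i) + b j - Mp j * (1 - ζ j) ≤ v j) ∧
        (∀ j, Mm j * ζ j ≤ v j) ∧ (∀ j, v j ≤ Mp j * ζ j) ∧
        s = ∑ j, v j} =
      {s : ℝ | ∃ j : Fin K,
        (∀ h : Fin K, (∑ i, ω h i * X i) + γ h ≤ (∑ i, ω j i * X i) + γ j) ∧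
        s = (∑ i, a j i * X i) + b j} := by
  have key : ∀ j h : Fin K, ∑ i, (ω h i - ω j i) * X i
      = (∑ i, ω h i * X i) - ∑ i, ω j i * X i := by
    intro j h
    rw [← Finset.sum_sub_distrib]
    exact Finset.sum_congr rfl fun i _ => by ring
  ext s
  simp only [Set.mem_setOf_eq]
  constructor
  · rintro ⟨ζ, v, hζ01, hζsum, hsep, hv1, hv2, hv3, hv4, rfl⟩
    obtain ⟨j₀, hj₀⟩ : ∃ j, ζ j = 1 := by
      by_contra h
      push_neg at h
      have hz : ∀ j, ζ j = 0 := fun j => (hζ01 j).resolve_right (h j)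
      simp [hz] at hζsum
    have hz : ∀ j, j ≠ j₀ → ζ j = 0 := by
      have hs : ∑ j ∈ Finset.univ.erase j₀, ζ j = 0 := by
        have h2 := Finset.sum_erase_add Finset.univ ζ (Finset.mem_univ j₀)
        rw [hζsum, hj₀] at h2
        linarith
      intro j hj
      have nonneg : ∀ i ∈ Finset.univ.erase j₀, 0 ≤ ζ i := by
        intro i _
        rcases hζ01 i with h | h <;> rw [h] <;> norm_num
      exact (Finset.sum_eq_zero_iff_of_nonneg nonneg).mp hs j
        (Finset.mem_erase.mpr ⟨hj, Finset.mem_univ j⟩)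
    have hvz : ∀ j, j ≠ j₀ → v j = 0 := by
      intro j hj
      have h3 := hv3 j
      have h4 := hv4 j
      rw [hz j hj] at h3 h4
      simp at h3 h4
      linarith
    have hvj₀ : v j₀ = (∑ i, a j₀ i * X i) + b j₀ := by
      have h1 := hv1 j₀
      have h2 := hv2 j₀
      rw [hj₀] at h1 h2
      simp at h1 h2
      linarith
    refine ⟨j₀, ?_, ?_⟩
    · intro h
      by_cases hh : h = j₀
      · rw [hh]
      · have := hsep j₀ h hh
        rw [hj₀] at this
        simp at this
        linarith
    · rw [Finset.sum_eq_single j₀ (fun j _ hj => hvz j hj) (by simp), hvj₀]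
  · rintro ⟨j, hmax, rfl⟩
    refine ⟨fun h => if h = j then 1 else 0,
      fun h => if h = j then (∑ i, a j i * X i) + b j else 0,
      fun h => by by_cases hh : h = j <;> simp [hh], by simp, ?_, ?_, ?_, ?_, ?_, by simp⟩
    · intro j' h _
      by_cases hj' : j' = j
      · subst hj'
        have := hmax h
        simp only [if_pos rfl]
        norm_num
        linarith
      · simp only [if_neg hj']
        have := hMφ j' h X hX
        rw [key j' h] at this
        linarith
    · intro j'
      by_cases hj' : j' = j
      · subst hj'; simp
      · simp only [if_neg hj']
        have := (hMb j' X hX).1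
        linarith
    · intro j'
      by_cases hj' : j' = j
      · subst hj'; simp
      · simp only [if_neg hj']
        have := (hMb j' X hX).2
        linarith
    · intro j'
      by_cases hj' : j' = j
      · subst hj'
        simp only [if_pos rfl]
        norm_num
        exact (hMb _ X hX).1
      · simp [hj']
    · intro j'
      by_cases hj' : j' = j
      · subst hj'
        simp only [if_pos rfl]
        norm_num
        exact (hMb _ X hX).2
      · simp [hj']
end
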